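/- In the filtering step setup, suppose additionally that ∑_{i∈G}(1/n − w_i) < ∑_{i∈B}(1/n − w_i). Define updated weights w' by w'_i = (1 − τ_i/τ_1)·w_i for i ≤ N and w'_i = w_i for i > N. Then ∑_{i∈G}(1/n − w'_i) < ∑_{i∈B}(1/n − w'_i). -/

import Mathlib

open MeasureTheory ProbabilityTheory Matrix Finset Real Filter

noncomputable section

namespace Paper

variable {d n : ℕ}

/-- Spectral (operator) norm of a matrix. -/
def specNorm (A : Matrix (Fin d) (Fin d) ℝ) : ℝ :=
  ‖LinearMap.toContinuousLinearMap (Matrix.toEuclideanLin A)‖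

/-- Frobenius norm of a matrix. -/
def frobNorm (A : Matrix (Fin d) (Fin d) ℝ) : ℝ :=
  Real.sqrt (∑ i, ∑ j, (A i j) ^ 2)

/-- Effective rank. -/
def erk (A : Matrix (Fin d) (Fin d) ℝ) : ℝ := A.trace / specNorm A

open Classical in
/-- Positive semidefinite square root (junk value `0` if not psd). -/
def matSqrt (A : Matrix (Fin d) (Fin d) ℝ) : Matrix (Fin d) (Fin d) ℝ :=
  if h : A.PosSemidef then
    (h.1.eigenvectorUnitary : Matrix (Fin d) (Fin d) ℝ) *
      diagonal (Real.sqrt ∘ h.1.eigenvalues) *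
      (star h.1.eigenvectorUnitary : Matrix (Fin d) (Fin d) ℝ)
  else 0

/-- Inverse of the positive semidefinite square root. -/
def invSqrt (A : Matrix (Fin d) (Fin d) ℝ) : Matrix (Fin d) (Fin d) ℝ := (matSqrt A)⁻¹

/-- Standard Gaussian measure on ℝ^d. -/
def stdGaussian (d : ℕ) : Measure (Fin d → ℝ) :=
  Measure.pi fun _ => gaussianReal 0 1

/-- Centered Gaussian measure with covariance S. -/
def gaussianOf (S : Matrix (Fin d) (Fin d) ℝ) : Measure (Fin d → ℝ) :=
  (stdGaussian d).map (matSqrt S).mulVec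

/-- Spatial sign (projection on the sphere of radius √d). -/
def spSign (d : ℕ) (x : Fin d → ℝ) : Fin d → ℝ :=
  fun i => Real.sqrt d * x i / Real.sqrt (∑ j, (x j) ^ 2)

/-- Truncated spatial sign with threshold Δ. -/
def truncSign (d : ℕ) (Δ : ℝ) (x : Fin d → ℝ) : Fin d → ℝ :=
  if (∑ i, (x i) ^ 2) < (d : ℝ) - Δ then fun i => Real.sqrt ((d : ℝ) / ((d : ℝ) - Δ)) * x i
  else if (d : ℝ) + Δ < (∑ i, (x i) ^ 2) then fun i => Real.sqrt ((d : ℝ) / ((d : ℝ) + Δ)) * x i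
  else spSign d x

/-- Mean vector of a measure on ℝ^d. -/
def meanVec (μ : Measure (Fin d → ℝ)) : Fin d → ℝ := fun i => ∫ x, x i ∂μ

/-- Covariance matrix of a measure on ℝ^d. -/
def covMatrix (μ : Measure (Fin d → ℝ)) : Matrix (Fin d) (Fin d) ℝ :=
  Matrix.of fun i j => ∫ x, (x i - meanVec μ i) * (x j - meanVec μ j) ∂μ

/-- Inner product of vectors indexed by `ι`. -/
def inner1 {ι : Type*} [Fintype ι] (v x : ι → ℝ) : ℝ := ∑ j, v j * x j

/-- Inner product of "matrices" indexed by `ι × ι`. -/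
def innerM {ι : Type*} [Fintype ι] (P Q : ι → ι → ℝ) : ℝ := ∑ j, ∑ k, P j k * Q j k

/-- Outer product. -/
def outer {ι : Type*} (x y : ι → ℝ) : ι → ι → ℝ := fun j k => x j * y k

/-- sup_{v ∈ V} ⟨v, a⟩². -/
def supInner {ι : Type*} [Fintype ι] (V : Set (ι → ℝ)) (a : ι → ℝ) : ℝ :=
  sSup ((fun v => (inner1 v a) ^ 2) '' V)

/-- Generalized stability (Definition 4 of the paper). -/
def IsStable {ι : Type*} [Fintype ι] (x : Fin n → ι → ℝ) (ε δ r : ℝ)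
    (V : Set (ι → ℝ)) (P : Set (ι → ι → ℝ)) (μ : ι → ℝ) (Q : ι → ι → ℝ) : Prop :=
  ∀ v ∈ V, ∀ p ∈ P, ∀ M : Finset (Fin n), (1 - ε) * (n : ℝ) ≤ (M.card : ℝ) →
    |(M.card : ℝ)⁻¹ * ∑ i ∈ M, inner1 v (fun j => x i j - μ j)| ≤ δ ∧
    |(M.card : ℝ)⁻¹ * ∑ i ∈ M, innerM p (outer (fun j => x i j - μ j) (fun j => x i j - μ j))
        - innerM p Q| ≤ δ ^ 2 / ε ∧
    |innerM p Q| ≤ r ^ 2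

/-- 𝒱 ⊗ 𝒱 ⊆ 𝒫. -/
def TensorSub {ι : Type*} (V : Set (ι → ℝ)) (P : Set (ι → ι → ℝ)) : Prop :=
  ∀ v ∈ V, ∀ v' ∈ V, outer v v' ∈ P

/-- Adequacy of 𝒫 with respect to 𝒱. -/
def Adequate {ι : Type*} [Fintype ι] (V : Set (ι → ℝ)) (P : Set (ι → ι → ℝ)) : Prop :=
  (∀ a : ι → ℝ, ∀ p ∈ P, 0 ≤ innerM p (outer a a)) ∧
  (∀ a b : ι → ℝ, ∀ p ∈ P, (innerM p (outer a b)) ^ 2 ≤ supInner V a * supInner V b)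

/-- The weight set 𝒲_ε. -/
def weightSet (n : ℕ) (ε : ℝ) : Set (Fin n → ℝ) :=
  {w | (∀ i, 0 ≤ w i ∧ w i ≤ 1 / (n : ℝ)) ∧ 1 - ε ≤ ∑ i, w i}

/-- Weighted mean μ_w. -/
def wMean {ι : Type*} (w : Fin n → ℝ) (x : Fin n → ι → ℝ) : ι → ℝ :=
  fun j => (∑ i, w i)⁻¹ * ∑ i, w i * x i j

/-- Weighted covariance Σ_w. -/
def wCov {ι : Type*} (w : Fin n → ℝ) (x : Fin n → ι → ℝ) : ι → ι → ℝ :=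
  fun j k => (∑ i, w i)⁻¹ * ∑ i, w i * (x i j - wMean w x j) * (x i k - wMean w x k)

/-- A d×d matrix viewed as a vector in ℝ^{d²}. -/
def mvec (A : Matrix (Fin d) (Fin d) ℝ) : Fin d × Fin d → ℝ := fun p => A p.1 p.2

/-- Id_d as a vector in ℝ^{d²}. -/
def idVec (d : ℕ) : Fin d × Fin d → ℝ := fun p => if p.1 = p.2 then 1 else 0

/-- 2·Id_{d²}. -/
def twoId (d : ℕ) : (Fin d × Fin d) → (Fin d × Fin d) → ℝ :=
  fun p q => if p = q then 2 else 0

/-- The Frobenius-norm ball ℬ_R (as vectors in ℝ^{d²}). -/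
def ballF (d : ℕ) (R : ℝ) : Set (Fin d × Fin d → ℝ) :=
  {V | ∑ p : Fin d × Fin d, (V p) ^ 2 ≤ R ^ 2}

/-- ℬ_R ⊗ ℬ_R. -/
def ballFT (d : ℕ) (R : ℝ) : Set ((Fin d × Fin d) → (Fin d × Fin d) → ℝ) :=
  {P | ∃ V ∈ ballF d R, ∃ W ∈ ballF d R, P = outer V W}

/-- 𝒮_R = {uuᵀ : ‖u‖ ≤ √R}. -/
def sphereSet (d : ℕ) (R : ℝ) : Set (Fin d × Fin d → ℝ) :=
  {V | ∃ u : Fin d → ℝ, (∑ i, (u i) ^ 2) ≤ R ∧ V = fun p => u p.1 * u p.2}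

/-- 𝒫_R: the set of degree-4 pseudo-expectation moment matrices Ẽ[v^{⊗4}]
under the constraint ‖v‖² ≤ R. -/
def pseudoSet (d : ℕ) (R : ℝ) : Set ((Fin d × Fin d) → (Fin d × Fin d) → ℝ) :=
  {P | ∃ L : MvPolynomial (Fin d) ℝ →ₗ[ℝ] ℝ,
    L 1 = 1 ∧
    (∀ q : MvPolynomial (Fin d) ℝ, q.totalDegree ≤ 2 → 0 ≤ L (q ^ 2)) ∧
    (∀ q : MvPolynomial (Fin d) ℝ, q.totalDegree ≤ 1 →
      0 ≤ L ((MvPolynomial.C R - ∑ i, MvPolynomial.X i ^ 2) * q ^ 2)) ∧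
    P = fun p q => L (MvPolynomial.X p.1 * MvPolynomial.X p.2 *
        MvPolynomial.X q.1 * MvPolynomial.X q.2)}

/-- The Hanson–Wright property of a distribution ρ with mean μv and covariance S. -/
def HansonWright (ρ : Measure (Fin d → ℝ)) (μv : Fin d → ℝ)
    (S : Matrix (Fin d) (Fin d) ℝ) (CHW : ℝ) : Prop :=
  ∀ A : Matrix (Fin d) (Fin d) ℝ, ∀ t : ℝ, 0 < t →
    ρ {x | t ≤ |(∑ j, ∑ k, ((invSqrt S).mulVec (fun l => x l - μv l)) j * A j k *
        ((invSqrt S).mulVec (fun l => x l - μv l)) k) - A.trace|}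
      ≤ ENNReal.ofReal (2 * Real.exp (-(1 / CHW) *
          min (t ^ 2 / (frobNorm A) ^ 2) (t / specNorm A)))

/-- ε-corruption of an indexed family of points. -/
def Corruption {α : Type*} (n : ℕ) (ε : ℝ) (x y : Fin n → α) : Prop :=
  ∃ G : Finset (Fin n), (1 - ε) * (n : ℝ) ≤ (G.card : ℝ) ∧ ∀ i ∈ G, x i = y i

/-- Entries of the 4-tensor E[(xxᵀ − Id)^{⊗2}] of a measure μ on ℝ^d. -/
def tensorEnt (μ : Measure (Fin d → ℝ)) (i1 i2 i3 i4 : Fin d) : ℝ :=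
  ∫ x, (x i1 * x i2 - if i1 = i2 then (1 : ℝ) else 0) *
       (x i3 * x i4 - if i3 = i4 then (1 : ℝ) else 0) ∂μ

/-- E[(xxᵀ − Id)^{⊗2}] as a d²×d² matrix. -/
def tensorQ (μ : Measure (Fin d → ℝ)) : (Fin d × Fin d) → (Fin d × Fin d) → ℝ :=
  fun p q => tensorEnt μ p.1 p.2 q.1 q.2

/-!
Write `τ_i` for the scores, `Δ = μ_w - μ` and `Φ = |⟨P*, Q - Σ_w⟩|`. Stability controls sums over
all large subsets of the good points; a fractional knapsack argument turns this into control of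
weighted sums with weights in `[0, 1/n]` and total deficit `O(ε)`. Hence on `G`, and on any subset
of `G` of weight `O(ε)`, the weighted score mass is the weight times `⟨P*, Q⟩ + ⟨P*, ΔΔᵀ⟩`, up to
errors that are tiny compared with `Φ` and half of `⟨P*, ΔΔᵀ⟩`. Comparing with the total mass
`(∑ w) ⟨P*, Σ_w⟩` shows `⟨P*, Q - Σ_w⟩ < 0`, and Cauchy–Schwarz for the bad points, whose weighted
deviations sum to `(∑_G w) Δ - ∑_G w (y_i - μ)`, gives `⟨P*, ΔΔᵀ⟩ ≤ Φ / 20`; so the bad points carry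
score mass at least `Φ / 2`, while the good points among the top `N` carry at most `Φ / 4`. The top
block has weight more than `2ε` and the bad points outside it weigh at most `ε`, so within the
block the bad points carry at least as much score as the good ones, and the update removes at
least as much weight from `B` as from `G`.
-/

section QuadraticForm

variable {ι κ : Type*} [Fintype ι]

lemma innerM_outer (p : ι → ι → ℝ) (a b : ι → ℝ) :
    innerM p (outer a b) = a ⬝ᵥ Matrix.of p *ᵥ b := by
  simp only [innerM, outer, dotProduct, mulVec, of_apply, Finset.mul_sum]
  exact Finset.sum_congr rfl fun j _ => Finset.sum_congr rfl fun k _ => by ring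

lemma innerM_sub (p A B : ι → ι → ℝ) : innerM p (A - B) = innerM p A - innerM p B := by
  simp only [innerM, Pi.sub_apply, mul_sub, Finset.sum_sub_distrib]

variable (A : Matrix ι ι ℝ)

lemma sub_dotProduct_mulVec_sub (a b : ι → ℝ) :
    (a - b) ⬝ᵥ A *ᵥ (a - b) = a ⬝ᵥ A *ᵥ a - (a ⬝ᵥ A *ᵥ b + b ⬝ᵥ A *ᵥ a) + b ⬝ᵥ A *ᵥ b := by
  simp only [mulVec_sub, dotProduct_sub, sub_dotProduct]
  ring

lemma mul_cross_le_of_nonneg (hA : ∀ z, 0 ≤ z ⬝ᵥ A *ᵥ z) (a b : ι → ℝ) (t : ℝ) :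
    t * (a ⬝ᵥ A *ᵥ b + b ⬝ᵥ A *ᵥ a) ≤ t ^ 2 * (a ⬝ᵥ A *ᵥ a) + b ⬝ᵥ A *ᵥ b := by
  have h := hA (t • a - b)
  simp only [sub_dotProduct_mulVec_sub, mulVec_smul, dotProduct_smul, smul_dotProduct,
    smul_eq_mul] at h
  linarith

lemma sum_mul_sub_dotProduct_mulVec_sub (T : Finset κ) (c : κ → ℝ) (z : κ → ι → ℝ) (d : ι → ℝ) :
    ∑ i ∈ T, c i * ((z i - d) ⬝ᵥ A *ᵥ (z i - d)) =
      ∑ i ∈ T, c i * (z i ⬝ᵥ A *ᵥ z i)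
        - ((∑ i ∈ T, c i • z i) ⬝ᵥ A *ᵥ d + d ⬝ᵥ A *ᵥ ∑ i ∈ T, c i • z i)
        + (∑ i ∈ T, c i) * (d ⬝ᵥ A *ᵥ d) := by
  simp only [sub_dotProduct_mulVec_sub, mul_add, mul_sub, Finset.sum_add_distrib,
    Finset.sum_sub_distrib, sum_dotProduct, mulVec_sum, dotProduct_sum, smul_dotProduct,
    mulVec_smul, dotProduct_smul, smul_eq_mul, Finset.sum_mul]

lemma dotProduct_mulVec_sum_le (hA : ∀ z, 0 ≤ z ⬝ᵥ A *ᵥ z) (T : Finset κ) (c : κ → ℝ)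
    (hc : ∀ i ∈ T, 0 ≤ c i) (z : κ → ι → ℝ) :
    (∑ i ∈ T, c i • z i) ⬝ᵥ A *ᵥ ∑ i ∈ T, c i • z i ≤
      (∑ i ∈ T, c i) * ∑ i ∈ T, c i * (z i ⬝ᵥ A *ᵥ z i) := by
  set v := ∑ i ∈ T, c i • z i
  set W := ∑ i ∈ T, c i
  rcases (Finset.sum_nonneg hc).eq_or_lt with hW | hW
  · have hc0 : ∀ i ∈ T, c i = 0 := (Finset.sum_eq_zero_iff_of_nonneg hc).1 hW.symm
    have hv : v = 0 := Finset.sum_eq_zero fun i hi => by rw [hc0 i hi, zero_smul]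
    simp [hv, show W = 0 from hW.symm]
  -- sum the cross-term bound for `(z i, v)` with `t = W`, weighted by `c i`
  have h := Finset.sum_le_sum fun i hi =>
    mul_le_mul_of_nonneg_left (mul_cross_le_of_nonneg A hA (z i) v W) (hc i hi)
  have hl : v ⬝ᵥ A *ᵥ v = ∑ i ∈ T, c i * (z i ⬝ᵥ A *ᵥ v) := by
    simp only [v, sum_dotProduct, smul_dotProduct, smul_eq_mul]
  have hr : v ⬝ᵥ A *ᵥ v = ∑ i ∈ T, c i * (v ⬝ᵥ A *ᵥ z i) := by
    simp only [v, mulVec_sum, dotProduct_sum, mulVec_smul, dotProduct_smul, smul_eq_mul]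
  have hs : ∑ i ∈ T, c i * (W * (z i ⬝ᵥ A *ᵥ v + v ⬝ᵥ A *ᵥ z i) ) = 2 * W * (v ⬝ᵥ A *ᵥ v) := by
    simp only [mul_add, Finset.sum_add_distrib, mul_left_comm _ W, ← Finset.mul_sum, ← hl, ← hr]
    ring
  have hS : ∑ i ∈ T, c i * (W ^ 2 * (z i ⬝ᵥ A *ᵥ z i) + v ⬝ᵥ A *ᵥ v) =
      W * (W * ∑ i ∈ T, c i * (z i ⬝ᵥ A *ᵥ z i)) + W * (v ⬝ᵥ A *ᵥ v) := by
    simp only [mul_add, Finset.sum_add_distrib, ← Finset.sum_mul, mul_left_comm _ (W ^ 2),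
      ← Finset.mul_sum, W]
    ring
  rw [hs, hS] at h
  exact le_of_mul_le_mul_left (by linarith) hW

end QuadraticForm

section Adequacy

variable {ι : Type*} [Fintype ι] {V : Set (ι → ℝ)} {P : Set (ι → ι → ℝ)} {p : ι → ι → ℝ}

lemma Adequate.dotProduct_mulVec_nonneg (hA : Adequate V P) (hp : p ∈ P) (z : ι → ℝ) :
    0 ≤ z ⬝ᵥ of p *ᵥ z := by
  rw [← innerM_outer]
  exact hA.1 z p hp

lemma Adequate.dotProduct_mulVec_le_sq (hA : Adequate V P) (hp : p ∈ P) {z : ι → ℝ} {D : ℝ}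
    (hz : ∀ v ∈ V, |v ⬝ᵥ z| ≤ D) : z ⬝ᵥ of p *ᵥ z ≤ D ^ 2 := by
  have hsup : supInner V z ≤ D ^ 2 := by
    refine Real.sSup_le ?_ (sq_nonneg D)
    rintro _ ⟨v, hv, rfl⟩
    exact sq_le_sq' (abs_le.1 (hz v hv)).1 (abs_le.1 (hz v hv)).2
  have hsup0 : 0 ≤ supInner V z := Real.sSup_nonneg fun _ ⟨_, _, h⟩ => h ▸ sq_nonneg _
  have h := hA.2 z z p hp
  rw [innerM_outer] at h
  nlinarith [hA.dotProduct_mulVec_nonneg hp z, mul_le_mul hsup hsup hsup0 (sq_nonneg D)]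

lemma Adequate.nonempty (hA : Adequate V P) (hp : p ∈ P) {M : ι → ι → ℝ} (hM : innerM p M ≠ 0) :
    V.Nonempty := by
  classical
  refine Set.nonempty_iff_ne_empty.2 fun hV => hM ?_
  have hp0 : ∀ j k, p j k = 0 := fun j k => by
    have h := hA.2 (Pi.single j 1) (Pi.single k 1) p hp
    simp only [hV, supInner, Set.image_empty, Real.sSup_empty, mul_zero, innerM_outer] at h
    simpa using h
  simp [innerM, hp0]

end Adequacy

section Knapsack

variable {κ : Type*}

lemma exists_top_subset [DecidableEq κ] (T : Finset κ) (f : κ → ℝ) (k : ℕ) :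
    ∃ S ⊆ T, S.card = min k T.card ∧ ∀ j ∈ T \ S, ∀ i ∈ S, f j ≤ f i := by
  induction k with
  | zero => exact ⟨∅, Finset.empty_subset T, by simp, by simp⟩
  | succ k ih =>
    obtain ⟨S, hST, hcard, htop⟩ := ih
    by_cases hk : T.card ≤ k
    · exact ⟨S, hST, by omega, htop⟩
    have hne : (T \ S).Nonempty := by
      rw [← Finset.card_pos, Finset.card_sdiff_of_subset hST]
      omega
    obtain ⟨i₀, hi₀, hmax⟩ := Finset.exists_max_image (T \ S) f hne
    refine ⟨insert i₀ S, Finset.insert_subset (Finset.mem_sdiff.1 hi₀).1 hST, ?_, ?_⟩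
    · rw [Finset.card_insert_of_notMem (Finset.mem_sdiff.1 hi₀).2]
      omega
    · intro j hj i hi
      have hj' : j ∈ T \ S := Finset.sdiff_subset_sdiff le_rfl (Finset.subset_insert i₀ S) hj
      rcases Finset.mem_insert.1 hi with rfl | hi
      · exact hmax j hj'
      · exact htop j hj' i hi

/-- Fractional knapsack: the optimum puts the full weight `a` on the `k` largest values. -/
lemma exists_subset_sum_mul_le (T : Finset κ) (c f : κ → ℝ) (k : ℕ) {a : ℝ}
    (hc0 : ∀ i ∈ T, 0 ≤ c i) (hca : ∀ i ∈ T, c i ≤ a) (hf : ∀ i ∈ T, 0 ≤ f i)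
    (hc : ∑ i ∈ T, c i ≤ k * a) :
    ∃ S ⊆ T, S.card ≤ k ∧ ∑ i ∈ T, c i * f i ≤ a * ∑ i ∈ S, f i := by
  classical
  obtain ⟨S, hST, hcard, htop⟩ := exists_top_subset T f k
  refine ⟨S, hST, hcard ▸ min_le_left _ _, ?_⟩
  by_cases hk : T.card ≤ k
  · obtain rfl : S = T := Finset.eq_of_subset_of_card_le hST (by omega)
    rw [Finset.mul_sum]
    exact Finset.sum_le_sum fun i hi => mul_le_mul_of_nonneg_right (hca i hi) (hf i hi)
  have hSk : (S.card : ℝ) = k := by rw [hcard, min_eq_left (by omega)]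
  obtain ⟨θ, hθ0, hθT, hθS⟩ : ∃ θ, 0 ≤ θ ∧ (∀ j ∈ T \ S, f j ≤ θ) ∧ ∀ i ∈ S, θ ≤ f i := by
    rcases S.eq_empty_or_nonempty with rfl | hS
    · exact ⟨∑ i ∈ T, f i, Finset.sum_nonneg hf,
        fun j hj => Finset.single_le_sum hf (Finset.sdiff_subset hj), by simp⟩
    obtain ⟨i₀, hi₀, hmin⟩ := Finset.exists_min_image S f hS
    exact ⟨f i₀, hf i₀ (hST hi₀), fun j hj => htop j hj i₀ hi₀, hmin⟩
  have hrest : ∑ i ∈ T \ S, c i * f i ≤ ∑ i ∈ S, (a - c i) * f i := calc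
    ∑ i ∈ T \ S, c i * f i ≤ ∑ i ∈ T \ S, c i * θ := Finset.sum_le_sum fun i hi =>
        mul_le_mul_of_nonneg_left (hθT i hi) (hc0 i (Finset.sdiff_subset hi))
    _ = (∑ i ∈ T, c i - ∑ i ∈ S, c i) * θ := by
        rw [← Finset.sum_mul, Finset.sum_sdiff_eq_sub hST]
    _ ≤ ∑ i ∈ S, (a - c i) * θ := by
        rw [← Finset.sum_mul, Finset.sum_sub_distrib, Finset.sum_const, nsmul_eq_mul, hSk]
        exact mul_le_mul_of_nonneg_right (by linarith) hθ0
    _ ≤ ∑ i ∈ S, (a - c i) * f i := Finset.sum_le_sum fun i hi =>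
        mul_le_mul_of_nonneg_left (hθS i hi) (by linarith [hca i (hST hi)])
  calc ∑ i ∈ T, c i * f i = ∑ i ∈ S, c i * f i + ∑ i ∈ T \ S, c i * f i := by
        rw [add_comm, Finset.sum_sdiff hST]
    _ ≤ ∑ i ∈ S, (c i * f i + (a - c i) * f i) := by rw [Finset.sum_add_distrib]; linarith
    _ = a * ∑ i ∈ S, f i := by rw [Finset.mul_sum]; exact Finset.sum_congr rfl fun i _ => by ring

lemma sum_mul_le_two_mul (G T : Finset κ) (hTG : T ⊆ G) (c h : κ → ℝ) (k : ℕ) {a D : ℝ}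
    (ha : 0 ≤ a) (hc0 : ∀ i ∈ T, 0 ≤ c i) (hca : ∀ i ∈ T, c i ≤ a) (hc : ∑ i ∈ T, c i ≤ k * a)
    (hM : ∀ M ⊆ G, G.card ≤ M.card + k → |∑ i ∈ M, h i| ≤ D) :
    ∑ i ∈ T, c i * h i ≤ 2 * a * D := by
  classical
  obtain ⟨S, hST, hSk, hS⟩ := exists_subset_sum_mul_le T c (fun i => max (h i) 0) k hc0 hca
    (fun _ _ => le_max_right _ _) hc
  -- the positive part of `h` sums over `S` to the sum of `h` over `S'`, whose complement in `G`
  -- is still large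
  set S' := S.filter fun i => 0 ≤ h i
  have hS'G : S' ⊆ G := (Finset.filter_subset _ _).trans (hST.trans hTG)
  have hpos : ∑ i ∈ S, max (h i) 0 = ∑ i ∈ G, h i - ∑ i ∈ G \ S', h i := by
    rw [Finset.sum_sdiff_eq_sub hS'G, sub_sub_cancel, Finset.sum_filter]
    exact Finset.sum_congr rfl fun i _ => by split_ifs with hi <;> simp [hi, le_of_not_ge]
  have hG := abs_le.1 (hM G le_rfl (Nat.le_add_right _ _))
  have hGS := abs_le.1 (hM (G \ S') Finset.sdiff_subset (by
    rw [Finset.card_sdiff_of_subset hS'G]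
    have : S'.card ≤ S.card := Finset.card_filter_le _ _
    have := Finset.card_le_card hS'G
    omega))
  calc ∑ i ∈ T, c i * h i ≤ ∑ i ∈ T, c i * max (h i) 0 :=
        Finset.sum_le_sum fun i hi => mul_le_mul_of_nonneg_left (le_max_left _ _) (hc0 i hi)
    _ ≤ a * ∑ i ∈ S, max (h i) 0 := hS
    _ ≤ a * (2 * D) := mul_le_mul_of_nonneg_left (by linarith) ha
    _ = 2 * a * D := by ring

lemma abs_sum_mul_le_two_mul (G T : Finset κ) (hTG : T ⊆ G) (c h : κ → ℝ) (k : ℕ) {a D : ℝ}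
    (ha : 0 ≤ a) (hc0 : ∀ i ∈ T, 0 ≤ c i) (hca : ∀ i ∈ T, c i ≤ a) (hc : ∑ i ∈ T, c i ≤ k * a)
    (hM : ∀ M ⊆ G, G.card ≤ M.card + k → |∑ i ∈ M, h i| ≤ D) :
    |∑ i ∈ T, c i * h i| ≤ 2 * a * D := by
  have hneg := sum_mul_le_two_mul G T hTG c (fun i => -h i) k ha hc0 hca hc fun M hM' hMk => by
    simpa only [Finset.sum_neg_distrib, abs_neg] using hM M hM' hMk
  simp only [mul_neg, Finset.sum_neg_distrib] at hneg
  exact abs_le.2 ⟨by linarith, sum_mul_le_two_mul G T hTG c h k ha hc0 hca hc hM⟩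

end Knapsack

section Stability

def LargeSubsetSumsLE (ε D : ℝ) (h : Fin n → ℝ) : Prop :=
  ∀ M : Finset (Fin n), (1 - ε) * n ≤ M.card → |∑ i ∈ M, h i| ≤ n * D

lemma LargeSubsetSumsLE.of_inv_card_mul {ε D : ℝ} {h : Fin n → ℝ} (hε : ε < 1)
    (hh : ∀ M : Finset (Fin n), M.Nonempty → (1 - ε) * n ≤ M.card →
      |(M.card : ℝ)⁻¹ * ∑ i ∈ M, h i| ≤ D) :
    LargeSubsetSumsLE ε D h := by
  intro M hM
  rcases M.eq_empty_or_nonempty with rfl | hne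
  · have : (n : ℝ) = 0 := by simp at hM; nlinarith [(Nat.cast_nonneg n : (0 : ℝ) ≤ n)]
    simp [this]
  have hpos : (0 : ℝ) < M.card := by exact_mod_cast hne.card_pos
  calc |∑ i ∈ M, h i| = M.card * |(M.card : ℝ)⁻¹ * ∑ i ∈ M, h i| := by
        rw [abs_mul, abs_inv, Nat.abs_cast, mul_inv_cancel_left₀ hpos.ne']
    _ ≤ n * D := mul_le_mul (by exact_mod_cast card_le_univ M |>.trans_eq (Fintype.card_fin n))
        (hh M hne hM) (abs_nonneg _) (Nat.cast_nonneg n)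

variable {ι : Type*} [Fintype ι] {ε δ r : ℝ} {V : Set (ι → ℝ)} {P : Set (ι → ι → ℝ)}
  {μ : ι → ℝ} {Q : ι → ι → ℝ} {y : Fin n → ι → ℝ} {v : ι → ℝ} {p : ι → ι → ℝ}

lemma IsStable.largeSubsetSumsLE_dotProduct (hy : IsStable y ε δ r V P μ Q) (hε : ε < 1)
    (hv : v ∈ V) (hp : p ∈ P) : LargeSubsetSumsLE ε δ fun i => v ⬝ᵥ (y i - μ) :=
  .of_inv_card_mul hε fun M _ hM => (hy v hv p hp M hM).1

lemma IsStable.largeSubsetSumsLE_quad (hy : IsStable y ε δ r V P μ Q) (hε : ε < 1)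
    (hv : v ∈ V) (hp : p ∈ P) :
    LargeSubsetSumsLE ε (δ ^ 2 / ε) fun i => (y i - μ) ⬝ᵥ of p *ᵥ (y i - μ) - innerM p Q := by
  refine .of_inv_card_mul hε fun M hne hM => ?_
  have hM0 : (M.card : ℝ) ≠ 0 := by exact_mod_cast hne.card_pos.ne'
  rw [Finset.sum_sub_distrib, Finset.sum_const, nsmul_eq_mul, mul_sub, inv_mul_cancel_left₀ hM0]
  have h := (hy v hv p hp M hM).2.1
  simp only [innerM_outer] at h
  exact h

end Stability

section Budget

variable {ε D : ℝ} {G T : Finset (Fin n)} {c h : Fin n → ℝ}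

lemma LargeSubsetSumsLE.abs_sum_mul_le (hh : LargeSubsetSumsLE (10 * ε) D h)
    (hεn : 1 ≤ ε * n) (hG : (1 - ε) * n ≤ G.card) (hTG : T ⊆ G) (hc0 : ∀ i ∈ T, 0 ≤ c i)
    (hc1 : ∀ i ∈ T, c i ≤ 1 / n) (hc : ∑ i ∈ T, c i ≤ 3 * ε) :
    |∑ i ∈ T, c i * h i| ≤ 2 * D := by
  have hn : (0 : ℝ) < n := Nat.cast_pos.2 (Nat.pos_of_ne_zero fun h0 => by norm_num [h0] at hεn)
  have hε : 0 < ε := by nlinarith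
  -- remove at most `⌈3 ε n⌉ ≤ 4 ε n` points from `G` and it stays `10 ε`-large
  set k := ⌈3 * ε * n⌉₊
  have hk : 3 * ε * n ≤ k := Nat.le_ceil _
  have hk' : (k : ℝ) < 3 * ε * n + 1 := Nat.ceil_lt_add_one (by positivity)
  have hbound := abs_sum_mul_le_two_mul G T hTG c h k (a := 1 / n) (by positivity) hc0 hc1
    (hc.trans (by rw [mul_one_div, le_div_iff₀ hn]; linarith)) fun M _ hMk => hh M (by
      have : (G.card : ℝ) ≤ M.card + k := by exact_mod_cast hMk
      linarith)
  rwa [show 2 * (1 / n) * (n * D) = 2 * D by field_simp] at hbound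

lemma LargeSubsetSumsLE.abs_sum_mul_le_of_deficit (hh : LargeSubsetSumsLE (10 * ε) D h)
    (hεn : 1 ≤ ε * n) (hG : (1 - ε) * n ≤ G.card) (hc0 : ∀ i ∈ G, 0 ≤ c i)
    (hc1 : ∀ i ∈ G, c i ≤ 1 / n) (hdef : ∑ i ∈ G, (1 / n - c i) ≤ 3 * ε) :
    |∑ i ∈ G, c i * h i| ≤ 3 * D := by
  have hn : (0 : ℝ) < n := Nat.cast_pos.2 (Nat.pos_of_ne_zero fun h0 => by norm_num [h0] at hεn)
  have hε : 0 < ε := by nlinarith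
  have hsplit : ∑ i ∈ G, c i * h i = 1 / n * ∑ i ∈ G, h i - ∑ i ∈ G, (1 / n - c i) * h i := by
    rw [Finset.mul_sum, ← Finset.sum_sub_distrib]
    exact Finset.sum_congr rfl fun i _ => by ring
  have hmean : |1 / n * ∑ i ∈ G, h i| ≤ D := by
    rw [abs_mul, abs_of_pos (by positivity), one_div_mul_eq_div, div_le_iff₀ hn, mul_comm]
    exact hh G (by nlinarith)
  have hdev := hh.abs_sum_mul_le hεn hG le_rfl (fun i hi => by linarith [hc1 i hi])
    (fun i hi => by linarith [hc0 i hi]) hdef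
  rw [hsplit]
  exact (abs_sub _ _).trans (by linarith)

end Budget

section WeightedMoments

variable {ι : Type*} (p : ι → ι → ℝ) (w : Fin n → ℝ) (x : Fin n → ι → ℝ)

lemma sum_smul_sub_wMean (hw : ∑ i, w i ≠ 0) : ∑ i, w i • (x i - wMean w x) = 0 := by
  ext j
  simp only [Finset.sum_apply, Pi.smul_apply, Pi.sub_apply, smul_eq_mul, mul_sub,
    Finset.sum_sub_distrib, ← Finset.sum_mul, wMean, Pi.zero_apply]
  field_simp
  ring

variable [Fintype ι]

def score (i : Fin n) : ℝ := (x i - wMean w x) ⬝ᵥ of p *ᵥ (x i - wMean w x)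

lemma innerM_wCov : innerM p (wCov w x) = (∑ i, w i)⁻¹ * ∑ i, w i * score p w x i := by
  simp only [score, ← innerM_outer, innerM, outer, wCov, Finset.mul_sum]
  refine (Finset.sum_congr rfl fun j _ => Finset.sum_comm).trans (Finset.sum_comm.trans ?_)
  refine Finset.sum_congr rfl fun i _ => Finset.sum_congr rfl fun j _ =>
    Finset.sum_congr rfl fun k _ => ?_
  simp only [Pi.sub_apply]
  ring

end WeightedMoments

/-- `g`, `b` are the score masses of the good and the bad points, `q = ⟨P*, ΔΔᵀ⟩` for
`Δ = μ_w - μ`, and `φ = ⟨P*, Q - Σ_w⟩`. -/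
lemma bad_mass_bounds {ε s sG sB Qh φ g b q E r : ℝ} (hε : ε ≤ 1 / 100) (hs : s = sG + sB)
    (hs1 : s ≤ 1) (hsG : 97 / 100 ≤ sG) (hsB : 0 ≤ sB) (hsBε : sB ≤ ε) (hb : 0 ≤ b) (hq : 0 ≤ q)
    (htot : g + b = s * (Qh - φ)) (hg : |g - sG * (Qh + q)| ≤ E + q / 2)
    (hcs : sG ^ 2 * q ≤ sB * b + E + q / 2) (hQh : |Qh| ≤ r ^ 2) (hφ : 0 < |φ|)
    (hE : E ≤ |φ| / 100) (hr : ε * r ^ 2 ≤ |φ| / 100) :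
    q ≤ |φ| / 20 ∧ |φ| / 2 ≤ b := by
  have hsBQh : |sB * Qh| ≤ ε * r ^ 2 := by
    rw [abs_mul, abs_of_nonneg hsB]
    exact mul_le_mul hsBε hQh (abs_nonneg _) (hsB.trans hsBε)
  have hb_eq : b = sB * Qh - s * φ - (g - sG * (Qh + q)) - sG * q := by
    rw [hs] at htot ⊢; linarith
  have hsGq : 97 / 100 * q ≤ sG * q := mul_le_mul_of_nonneg_right hsG hq
  have hsGq' : sG * q ≤ q := by nlinarith
  have hsG2q : 9409 / 10000 * q ≤ sG ^ 2 * q := by nlinarith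
  have hg' := abs_le.1 hg
  have hsBQh' := abs_le.1 hsBQh
  -- a nonnegative `φ` would make the bad score mass negative
  have hφneg : φ < 0 := by
    by_contra! h
    rw [abs_of_nonneg h] at hφ hE hr
    have : 97 / 100 * φ ≤ s * φ := mul_le_mul_of_nonneg_right (by linarith) h
    linarith
  rw [abs_of_neg hφneg] at hφ hE hr ⊢
  have hsφ : 97 / 100 * -φ ≤ s * -φ ∧ s * -φ ≤ -φ :=
    ⟨mul_le_mul_of_nonneg_right (by linarith) hφ.le, by nlinarith⟩
  have hb_le : b ≤ 102 / 100 * -φ := by nlinarith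
  have hsBb : sB * b ≤ 1 / 100 * (102 / 100 * -φ) :=
    mul_le_mul (hsBε.trans hε) hb_le hb (by norm_num)
  constructor <;> nlinarith

lemma sum_one_div_le_one : ∑ _i : Fin n, 1 / (n : ℝ) ≤ 1 := by
  simpa using mul_inv_le_one

lemma rpow_mul_rpow_sq_le {ε Φ : ℝ} (hε : 0 ≤ ε) (hΦ : 0 ≤ Φ) (h : 10 ^ 8 * ε ≤ Φ) :
    (ε ^ ((3 : ℝ) / 4) * Φ ^ ((1 : ℝ) / 4)) ^ 2 ≤ ε * Φ / 10 ^ 4 := by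
  have h4 : ((ε ^ ((3 : ℝ) / 4) * Φ ^ ((1 : ℝ) / 4)) ^ 2) ^ 2 = ε ^ 3 * Φ := by
    rw [← pow_mul, mul_pow, ← Real.rpow_natCast, ← Real.rpow_natCast (Φ ^ _),
      ← Real.rpow_mul hε, ← Real.rpow_mul hΦ]
    norm_num
  refine (pow_le_pow_iff_left₀ (by positivity) (by positivity) two_ne_zero).1 ?_
  rw [h4]
  nlinarith [mul_nonneg (mul_nonneg (sq_nonneg ε) hΦ) (sub_nonneg.2 h)]

structure FilterStep {ι : Type*} [Fintype ι] (ε δ δ' r : ℝ) (V : Set (ι → ℝ))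
    (P : Set (ι → ι → ℝ)) (μ : ι → ℝ) (Q : ι → ι → ℝ) (y x : Fin n → ι → ℝ) (G : Finset (Fin n))
    (w : Fin n → ℝ) (p : ι → ι → ℝ) : Prop where
  eps_pos : 0 < ε
  eps_lt : ε < δ
  delta_lt : δ < 0.01
  adequate : Adequate V P
  mem : p ∈ P
  stable : IsStable y (10 * ε) δ' r V P μ Q
  card_good : (1 - ε) * n ≤ G.card
  agree : ∀ i ∈ G, x i = y i
  weights : w ∈ weightSet n (2 * ε)
  invariant : ∑ i ∈ G, (1 / (n : ℝ) - w i) < ∑ i ∈ Gᶜ, (1 / (n : ℝ) - w i)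
  signal_gt : 10 ^ 8 * (δ ^ 2 / ε + ε * r ^ 2) < |innerM p (Q - wCov w x)|
  dev_le : δ' ≤ 1 / 1000 *
    (δ + ε ^ ((3 : ℝ) / 4) * |innerM p (Q - wCov w x)| ^ ((1 : ℝ) / 4) + ε * r)

namespace FilterStep

variable {ι : Type*} [Fintype ι] {ε δ δ' r : ℝ} {V : Set (ι → ℝ)} {P : Set (ι → ι → ℝ)}
  {μ : ι → ℝ} {Q : ι → ι → ℝ} {y x : Fin n → ι → ℝ} {G : Finset (Fin n)} {w : Fin n → ℝ}
  {p : ι → ι → ℝ} (hF : FilterStep ε δ δ' r V P μ Q y x G w p)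

include hF

lemma weight_nonneg (i : Fin n) : 0 ≤ w i := (hF.weights.1 i).1

lemma weight_le (i : Fin n) : w i ≤ 1 / n := (hF.weights.1 i).2

lemma eps_lt_hundredth : ε < 1 / 100 := by linarith [hF.eps_lt, hF.delta_lt]

lemma sum_weight_le_one : ∑ i, w i ≤ 1 :=
  (Finset.sum_le_sum fun i _ => hF.weight_le i).trans sum_one_div_le_one

lemma sum_deficit_add_sum_compl_le :
    ∑ i ∈ G, (1 / (n : ℝ) - w i) + ∑ i ∈ Gᶜ, (1 / (n : ℝ) - w i) ≤ 2 * ε := by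
  rw [Finset.sum_add_sum_compl, Finset.sum_sub_distrib]
  linarith [hF.weights.2, sum_one_div_le_one (n := n)]

lemma sum_deficit_nonneg (T : Finset (Fin n)) : 0 ≤ ∑ i ∈ T, (1 / (n : ℝ) - w i) :=
  Finset.sum_nonneg fun i _ => sub_nonneg.2 (hF.weight_le i)

lemma deficit_lt : ∑ i ∈ G, (1 / (n : ℝ) - w i) < ε := by
  linarith [hF.invariant, hF.sum_deficit_add_sum_compl_le]

lemma card_compl_le : (Gᶜ.card : ℝ) ≤ ε * n := by
  rw [Finset.card_compl, Fintype.card_fin, Nat.cast_sub (G.card_le_univ.trans_eq (by simp))]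
  linarith [hF.card_good]

lemma one_le_eps_mul : 1 ≤ ε * n := by
  have hne : Gᶜ.Nonempty := Finset.nonempty_iff_ne_empty.2 fun h => by
    have := hF.invariant
    rw [h, Finset.sum_empty] at this
    linarith [hF.sum_deficit_nonneg G]
  exact le_trans (by exact_mod_cast hne.card_pos) hF.card_compl_le

lemma one_div_le_eps : 1 / (n : ℝ) ≤ ε :=
  div_le_of_le_mul₀ (Nat.cast_nonneg _) hF.eps_pos.le hF.one_le_eps_mul

lemma sum_compl_weight_le : ∑ i ∈ Gᶜ, w i ≤ ε := calc
  ∑ i ∈ Gᶜ, w i ≤ ∑ _i ∈ Gᶜ, 1 / (n : ℝ) := Finset.sum_le_sum fun i _ => hF.weight_le i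
  _ = Gᶜ.card / n := by rw [Finset.sum_const, nsmul_eq_mul, mul_one_div]
  _ ≤ ε := div_le_of_le_mul₀ (Nat.cast_nonneg _) hF.eps_pos.le hF.card_compl_le

lemma signal_pos : 0 < |innerM p (Q - wCov w x)| := by
  have hε := hF.eps_pos
  exact lt_of_le_of_lt (by positivity) hF.signal_gt

lemma nonempty : V.Nonempty := hF.adequate.nonempty hF.mem (abs_pos.1 hF.signal_pos)

lemma dev_nonneg : 0 ≤ δ' := by
  obtain ⟨v, hv⟩ := hF.nonempty
  refine (abs_nonneg _).trans (hF.stable v hv p hF.mem Finset.univ ?_).1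
  simpa using mul_le_of_le_one_left (Nat.cast_nonneg n) (by linarith [hF.eps_pos])

lemma abs_innerM_le : |innerM p Q| ≤ r ^ 2 := by
  obtain ⟨v, hv⟩ := hF.nonempty
  refine (hF.stable v hv p hF.mem Finset.univ ?_).2.2
  simpa using mul_le_of_le_one_left (Nat.cast_nonneg n) (by linarith [hF.eps_pos])

lemma radius_le : ε * r ^ 2 ≤ |innerM p (Q - wCov w x)| / 10 ^ 8 := by
  have hε := hF.eps_pos
  have : 0 ≤ δ ^ 2 / ε := by positivity
  linarith [hF.signal_gt]

lemma dev_sq_le : δ' ^ 2 ≤ ε * |innerM p (Q - wCov w x)| / 10 ^ 9 := by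
  set Φ := |innerM p (Q - wCov w x)|
  set ρ := ε ^ ((3 : ℝ) / 4) * Φ ^ ((1 : ℝ) / 4)
  have hε := hF.eps_pos
  have hδ : δ ^ 2 ≤ ε * Φ / 10 ^ 8 := by
    have : 0 ≤ ε * r ^ 2 := by positivity
    have := hF.signal_gt
    rw [mul_add, mul_div_assoc', div_add' _ _ _ hε.ne', div_lt_iff₀ hε] at this
    nlinarith
  have hρ : ρ ^ 2 ≤ ε * Φ / 10 ^ 4 := rpow_mul_rpow_sq_le hε.le (abs_nonneg _) (by
    have : ε * ε < δ ^ 2 := by nlinarith [hF.eps_lt]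
    nlinarith)
  have hr : (ε * r) ^ 2 ≤ ε * Φ / 10 ^ 8 := by
    have := mul_le_mul_of_nonneg_left hF.radius_le hε.le
    nlinarith
  have hdev : δ' ^ 2 ≤ (1 / 1000 * (δ + ρ + ε * r)) ^ 2 :=
    pow_le_pow_left₀ hF.dev_nonneg hF.dev_le 2
  nlinarith [sq_nonneg (δ - ρ), sq_nonneg (δ - ε * r), sq_nonneg (ρ - ε * r)]

lemma sums_dotProduct {v : ι → ℝ} (hv : v ∈ V) :
    LargeSubsetSumsLE (10 * ε) δ' fun i => v ⬝ᵥ (y i - μ) :=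
  hF.stable.largeSubsetSumsLE_dotProduct (by linarith [hF.eps_lt_hundredth]) hv hF.mem

lemma sums_quad : LargeSubsetSumsLE (10 * ε) (δ' ^ 2 / (10 * ε))
    fun i => (y i - μ) ⬝ᵥ of p *ᵥ (y i - μ) - innerM p Q :=
  have ⟨_, hv⟩ := hF.nonempty
  hF.stable.largeSubsetSumsLE_quad (by linarith [hF.eps_lt_hundredth]) hv hF.mem

variable {T : Finset (Fin n)}

-- The good points are controlled on all of `G`, whose weights are nearly uniform, and on every
-- subset of `G` of weight at most `3ε`.
lemma abs_sum_weight_mul_le {D : ℝ} {h : Fin n → ℝ} (hh : LargeSubsetSumsLE (10 * ε) D h)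
    (hD : 0 ≤ D) (hT : T = G ∨ T ⊆ G ∧ ∑ i ∈ T, w i ≤ 3 * ε) :
    |∑ i ∈ T, w i * h i| ≤ 3 * D := by
  rcases hT with rfl | ⟨hTG, hTw⟩
  · exact hh.abs_sum_mul_le_of_deficit hF.one_le_eps_mul hF.card_good
      (fun i _ => hF.weight_nonneg i) (fun i _ => hF.weight_le i)
      (by linarith [hF.deficit_lt, hF.eps_pos])
  · linarith [hh.abs_sum_mul_le hF.one_le_eps_mul hF.card_good hTG
      (fun i _ => hF.weight_nonneg i) (fun i _ => hF.weight_le i) hTw]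

lemma quad_sum_le (hT : T = G ∨ T ⊆ G ∧ ∑ i ∈ T, w i ≤ 3 * ε) :
    (∑ i ∈ T, w i • (y i - μ)) ⬝ᵥ of p *ᵥ (∑ i ∈ T, w i • (y i - μ)) ≤ (3 * δ') ^ 2 :=
  hF.adequate.dotProduct_mulVec_le_sq hF.mem fun v hv => by
    simpa only [dotProduct_sum, dotProduct_smul, smul_eq_mul] using
      hF.abs_sum_weight_mul_le (hF.sums_dotProduct hv) hF.dev_nonneg hT

lemma abs_cross_le (hT : T = G ∨ T ⊆ G ∧ ∑ i ∈ T, w i ≤ 3 * ε) (d : ι → ℝ) :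
    |(∑ i ∈ T, w i • (y i - μ)) ⬝ᵥ of p *ᵥ d + d ⬝ᵥ of p *ᵥ ∑ i ∈ T, w i • (y i - μ)| ≤
      18 * δ' ^ 2 + d ⬝ᵥ of p *ᵥ d / 2 := by
  have hpsd := hF.adequate.dotProduct_mulVec_nonneg hF.mem
  have hm := hF.quad_sum_le hT
  have h₁ := mul_cross_le_of_nonneg (of p) hpsd (∑ i ∈ T, w i • (y i - μ)) d 2
  have h₂ := mul_cross_le_of_nonneg (of p) hpsd (∑ i ∈ T, w i • (y i - μ)) d (-2)
  exact abs_le.2 ⟨by nlinarith, by nlinarith⟩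

lemma sum_score_eq (hTG : T ⊆ G) :
    ∑ i ∈ T, w i * score p w x i =
      ∑ i ∈ T, w i * ((y i - μ) ⬝ᵥ of p *ᵥ (y i - μ))
        - ((∑ i ∈ T, w i • (y i - μ)) ⬝ᵥ of p *ᵥ (wMean w x - μ)
          + (wMean w x - μ) ⬝ᵥ of p *ᵥ ∑ i ∈ T, w i • (y i - μ))
        + (∑ i ∈ T, w i) * ((wMean w x - μ) ⬝ᵥ of p *ᵥ (wMean w x - μ)) := by
  rw [← sum_mul_sub_dotProduct_mulVec_sub]
  refine Finset.sum_congr rfl fun i hi => ?_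
  rw [score, hF.agree i (hTG hi), sub_sub_sub_cancel_right]

lemma abs_sum_score_sub_le (hT : T = G ∨ T ⊆ G ∧ ∑ i ∈ T, w i ≤ 3 * ε) :
    |∑ i ∈ T, w i * score p w x i -
        (∑ i ∈ T, w i) * (innerM p Q + (wMean w x - μ) ⬝ᵥ of p *ᵥ (wMean w x - μ))| ≤
      3 * (δ' ^ 2 / (10 * ε)) + 18 * δ' ^ 2 + (wMean w x - μ) ⬝ᵥ of p *ᵥ (wMean w x - μ) / 2 := by
  have hTG : T ⊆ G := hT.elim (·.le) (·.1)
  have hquad := hF.abs_sum_weight_mul_le hF.sums_quad (by have := hF.eps_pos; positivity) hT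
  simp only [mul_sub, Finset.sum_sub_distrib, ← Finset.sum_mul] at hquad
  rw [hF.sum_score_eq hTG]
  have hcross := hF.abs_cross_le hT (wMean w x - μ)
  rw [abs_le] at hquad hcross ⊢
  constructor <;> linarith

lemma sum_weight_pos : 0 < ∑ i, w i := by
  linarith [hF.weights.2, hF.eps_lt_hundredth]

lemma sum_compl_smul_eq :
    ∑ i ∈ Gᶜ, w i • (x i - wMean w x) =
      (∑ i ∈ G, w i) • (wMean w x - μ) - ∑ i ∈ G, w i • (y i - μ) := by
  have htot := sum_smul_sub_wMean w x hF.sum_weight_pos.ne'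
  rw [← Finset.sum_add_sum_compl G] at htot
  have hG : ∑ i ∈ G, w i • (x i - wMean w x) =
      ∑ i ∈ G, w i • (y i - μ) - (∑ i ∈ G, w i) • (wMean w x - μ) := by
    rw [Finset.sum_smul, ← Finset.sum_sub_distrib]
    refine Finset.sum_congr rfl fun i hi => ?_
    rw [hF.agree i hi, ← smul_sub, sub_sub_sub_cancel_right]
  rw [hG] at htot
  rw [eq_sub_of_add_eq' htot, zero_sub, neg_sub]

lemma sq_mul_quad_le :
    (∑ i ∈ G, w i) ^ 2 * ((wMean w x - μ) ⬝ᵥ of p *ᵥ (wMean w x - μ)) ≤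
      (∑ i ∈ Gᶜ, w i) * (∑ i ∈ Gᶜ, w i * score p w x i) + 18 * δ' ^ 2
        + (wMean w x - μ) ⬝ᵥ of p *ᵥ (wMean w x - μ) / 2 := by
  set sG := ∑ i ∈ G, w i
  set u := ∑ i ∈ G, w i • (y i - μ)
  set d := wMean w x - μ
  -- Cauchy–Schwarz for the bad points, whose weighted deviations sum to `sG • d - u`
  have hcs : (sG • d - u) ⬝ᵥ of p *ᵥ (sG • d - u) ≤
      (∑ i ∈ Gᶜ, w i) * ∑ i ∈ Gᶜ, w i * score p w x i := by
    rw [← hF.sum_compl_smul_eq]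
    exact dotProduct_mulVec_sum_le _ (hF.adequate.dotProduct_mulVec_nonneg hF.mem) _ _
      (fun i _ => hF.weight_nonneg i) _
  simp only [sub_dotProduct_mulVec_sub, mulVec_smul, dotProduct_smul, smul_dotProduct,
    smul_eq_mul] at hcs
  have hsG : 0 ≤ sG := Finset.sum_nonneg fun i _ => hF.weight_nonneg i
  have hsG1 : sG ≤ 1 := (Finset.sum_le_sum_of_subset_of_nonneg (Finset.subset_univ G)
    fun i _ _ => hF.weight_nonneg i).trans hF.sum_weight_le_one
  have hcross := abs_le.1 (hF.abs_cross_le (Or.inl rfl) d)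
  have hu := hF.adequate.dotProduct_mulVec_nonneg hF.mem u
  nlinarith

lemma error_le : 3 * (δ' ^ 2 / (10 * ε)) + 18 * δ' ^ 2 ≤ |innerM p (Q - wCov w x)| / 100 := by
  have hε := hF.eps_pos
  have hdev := hF.dev_sq_le
  have : δ' ^ 2 / (10 * ε) ≤ |innerM p (Q - wCov w x)| / 10 ^ 10 := by
    rw [div_le_iff₀ (by positivity)]
    linarith
  nlinarith [hF.eps_lt_hundredth, abs_nonneg (innerM p (Q - wCov w x))]

lemma score_nonneg (i : Fin n) : 0 ≤ score p w x i :=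
  hF.adequate.dotProduct_mulVec_nonneg hF.mem _

lemma bad_score_mass_bounds :
    (wMean w x - μ) ⬝ᵥ of p *ᵥ (wMean w x - μ) ≤ |innerM p (Q - wCov w x)| / 20 ∧
      |innerM p (Q - wCov w x)| / 2 ≤ ∑ i ∈ Gᶜ, w i * score p w x i := by
  have hsum := Finset.sum_add_sum_compl G w
  have htot : ∑ i ∈ G, w i * score p w x i + ∑ i ∈ Gᶜ, w i * score p w x i =
      (∑ i, w i) * (innerM p Q - innerM p (Q - wCov w x)) := by
    rw [Finset.sum_add_sum_compl, innerM_sub, sub_sub_cancel, innerM_wCov,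
      mul_inv_cancel_left₀ hF.sum_weight_pos.ne']
  have hε := hF.eps_pos
  have hΔ : 0 ≤ δ' ^ 2 / (10 * ε) := by positivity
  exact bad_mass_bounds (E := 3 * (δ' ^ 2 / (10 * ε)) + 18 * δ' ^ 2) hF.eps_lt_hundredth.le
    hsum.symm hF.sum_weight_le_one
    (by linarith [hF.weights.2, hF.eps_lt_hundredth, hF.sum_compl_weight_le])
    (Finset.sum_nonneg fun i _ => hF.weight_nonneg i) hF.sum_compl_weight_le
    (Finset.sum_nonneg fun i _ => mul_nonneg (hF.weight_nonneg i) (hF.score_nonneg i))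
    (hF.adequate.dotProduct_mulVec_nonneg hF.mem _) htot
    ((hF.abs_sum_score_sub_le (Or.inl rfl)).trans_eq (by ring))
    (hF.sq_mul_quad_le.trans (by linarith)) hF.abs_innerM_le hF.signal_pos hF.error_le
    (hF.radius_le.trans (by linarith [hF.signal_pos]))

lemma two_mul_sum_score_le (hTG : T ⊆ G) (hTw : ∑ i ∈ T, w i ≤ 3 * ε) :
    2 * ∑ i ∈ T, w i * score p w x i ≤ ∑ i ∈ Gᶜ, w i * score p w x i := by
  obtain ⟨hq, hbad⟩ := hF.bad_score_mass_bounds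
  have hgood := (abs_le.1 (hF.abs_sum_score_sub_le (Or.inr ⟨hTG, hTw⟩))).2
  have ht : 0 ≤ ∑ i ∈ T, w i := Finset.sum_nonneg fun i _ => hF.weight_nonneg i
  have hQ := (abs_le.1 hF.abs_innerM_le).2
  have hq0 : 0 ≤ (wMean w x - μ) ⬝ᵥ of p *ᵥ (wMean w x - μ) :=
    hF.adequate.dotProduct_mulVec_nonneg hF.mem _
  have hε := hF.eps_lt_hundredth
  nlinarith [hF.error_le, hF.radius_le, hF.signal_pos, mul_le_mul_of_nonneg_left hQ ht,
    mul_le_mul_of_nonneg_right hTw (sq_nonneg r), mul_le_mul_of_nonneg_right hTw hq0]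

end FilterStep

section Filtering

variable {κ : Type*} [Fintype κ] [DecidableEq κ] {G : Finset κ} {t : κ → Prop} [DecidablePred t]
  {w τ : κ → ℝ}

lemma sum_filter_le_sum_compl_filter {ε θ : ℝ} (hw : ∀ i, 0 ≤ w i) (hθ : 0 ≤ θ)
    (hin : ∀ i, t i → θ ≤ τ i) (hout : ∀ i, ¬ t i → τ i ≤ θ)
    (htop : 2 * ε < ∑ i ∈ Finset.univ.filter t, w i) (hB : ∑ i ∈ Gᶜ, w i ≤ ε)
    (hbad : 2 * ∑ i ∈ G.filter t, w i * τ i ≤ ∑ i ∈ Gᶜ, w i * τ i) :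
    ∑ i ∈ G.filter t, w i * τ i ≤ ∑ i ∈ Gᶜ.filter t, w i * τ i := by
  have htop_mass : 2 * ε * θ ≤ ∑ i ∈ G.filter t, w i * τ i + ∑ i ∈ Gᶜ.filter t, w i * τ i := calc
    2 * ε * θ ≤ (∑ i ∈ Finset.univ.filter t, w i) * θ := mul_le_mul_of_nonneg_right htop.le hθ
    _ = ∑ i ∈ Finset.univ.filter t, w i * θ := Finset.sum_mul _ _ _
    _ ≤ ∑ i ∈ Finset.univ.filter t, w i * τ i := Finset.sum_le_sum fun i hi =>
        mul_le_mul_of_nonneg_left (hin i (Finset.mem_filter.1 hi).2) (hw i)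
    _ = _ := by simp only [Finset.sum_filter, Finset.sum_add_sum_compl]
  have hrest : ∑ i ∈ Gᶜ.filter (¬ t ·), w i * τ i ≤ ε * θ := calc
    ∑ i ∈ Gᶜ.filter (¬ t ·), w i * τ i ≤ ∑ i ∈ Gᶜ.filter (¬ t ·), w i * θ :=
        Finset.sum_le_sum fun i hi =>
          mul_le_mul_of_nonneg_left (hout i (Finset.mem_filter.1 hi).2) (hw i)
    _ ≤ ∑ i ∈ Gᶜ, w i * θ := Finset.sum_le_sum_of_subset_of_nonneg (Finset.filter_subset _ _)
        fun i _ _ => mul_nonneg (hw i) hθ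
    _ ≤ ε * θ := by rw [← Finset.sum_mul]; exact mul_le_mul_of_nonneg_right hB hθ
  have := Finset.sum_filter_add_sum_filter_not Gᶜ t fun i => w i * τ i
  linarith

lemma sum_deficit_update_lt {a τ₀ : ℝ} (hτ₀ : 0 ≤ τ₀)
    (hinv : ∑ i ∈ G, (a - w i) < ∑ i ∈ Gᶜ, (a - w i))
    (hle : ∑ i ∈ G.filter t, w i * τ i ≤ ∑ i ∈ Gᶜ.filter t, w i * τ i) :
    ∑ i ∈ G, (a - if t i then (1 - τ i / τ₀) * w i else w i) <
      ∑ i ∈ Gᶜ, (a - if t i then (1 - τ i / τ₀) * w i else w i) := by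
  have hsplit : ∀ S : Finset κ, ∑ i ∈ S, (a - if t i then (1 - τ i / τ₀) * w i else w i) =
      ∑ i ∈ S, (a - w i) + (∑ i ∈ S.filter t, w i * τ i) / τ₀ := fun S => by
    rw [Finset.sum_filter, Finset.sum_div, ← Finset.sum_add_distrib]
    exact Finset.sum_congr rfl fun i _ => by split_ifs <;> ring
  rw [hsplit, hsplit]
  exact add_lt_add_of_lt_of_le hinv (div_le_div_of_nonneg_right hle hτ₀)

end Filtering

lemma sum_filter_lt_le {N : ℕ} {w : Fin n → ℝ} {ε a : ℝ} (hN : 0 < N) (hNn : N ≤ n)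
    (hw : ∀ i, w i ≤ a)
    (hmin : ∀ N' < N, ∑ i ∈ Finset.univ.filter (fun i : Fin n => (i : ℕ) < N'), w i ≤ 2 * ε) :
    ∑ i ∈ Finset.univ.filter (fun i : Fin n => (i : ℕ) < N), w i ≤ 2 * ε + a := by
  have hins : Finset.univ.filter (fun i : Fin n => (i : ℕ) < N) =
      insert ⟨N - 1, by omega⟩ (Finset.univ.filter fun i : Fin n => (i : ℕ) < N - 1) := by
    ext i
    simp only [Finset.mem_filter, Finset.mem_univ, true_and, Finset.mem_insert, Fin.ext_iff]
    omega
  rw [hins, Finset.sum_insert (by simp), add_comm]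
  exact add_le_add (hmin _ (by omega)) (hw _)

/-- invariant of the filtering algorithm. -/
theorem filtering_invariant :
    ∃ C c : ℝ, 0 < C ∧ 0 < c ∧
      ∀ (m n : ℕ) (ε δ δ' r : ℝ)
        (V : Set (Fin m → ℝ)) (P : Set (Fin m → Fin m → ℝ))
        (μ : Fin m → ℝ) (Q : Fin m → Fin m → ℝ)
        (y x : Fin n → Fin m → ℝ) (G : Finset (Fin n))
        (w : Fin n → ℝ) (Pstar : Fin m → Fin m → ℝ)
        (τ : Fin n → ℝ) (N : ℕ) (hn : 0 < n),
        0 < ε → ε < δ → δ < 0.01 → 0 < r →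
        TensorSub V P → Adequate V P →
        IsStable y (10 * ε) δ' r V P μ Q →
        (1 - ε) * (n : ℝ) ≤ (G.card : ℝ) → (∀ i ∈ G, x i = y i) →
        w ∈ weightSet n (2 * ε) →
        Pstar ∈ P →
        C * (δ ^ 2 / ε + ε * r ^ 2) <
          |innerM Pstar (fun j k => Q j k - wCov w x j k)| →
        δ' ≤ c * (δ + ε ^ ((3 : ℝ)/4) *
            |innerM Pstar (fun j k => Q j k - wCov w x j k)| ^ ((1 : ℝ)/4) + ε * r) →
        (∀ i, τ i = innerM Pstar
          (outer (fun j => x i j - wMean w x j) (fun j => x i j - wMean w x j))) →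
        (∀ i j : Fin n, i ≤ j → τ j ≤ τ i) →
        0 < N → N ≤ n →
        2 * ε < ∑ i ∈ Finset.univ.filter (fun i : Fin n => (i : ℕ) < N), w i →
        (∀ N' : ℕ, N' < N →
          ∑ i ∈ Finset.univ.filter (fun i : Fin n => (i : ℕ) < N'), w i ≤ 2 * ε) →
        (∑ i ∈ G, (1 / (n : ℝ) - w i)) < (∑ i ∈ Gᶜ, (1 / (n : ℝ) - w i)) →
        (let w' : Fin n → ℝ := fun i =>
            if (i : ℕ) < N then (1 - τ i / τ ⟨0, hn⟩) * w i else w i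
         (∑ i ∈ G, (1 / (n : ℝ) - w' i)) < (∑ i ∈ Gᶜ, (1 / (n : ℝ) - w' i))) := by
  refine ⟨10 ^ 8, 1 / 1000, by norm_num, by norm_num, ?_⟩
  intro m n ε δ δ' r V P μ Q y x G w p τ N hn hε hεδ hδ _ _ hadeq hstab hG hxy hw hp hsignal hdev
    hτ hsort hN hNn hNw hNmin hinv
  have hF : FilterStep ε δ δ' r V P μ Q y x G w p :=
    ⟨hε, hεδ, hδ, hadeq, hp, hstab, hG, hxy, hw, hinv, hsignal, hdev⟩
  obtain rfl : τ = score p w x := funext fun i => (hτ i).trans (innerM_outer _ _ _)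
  have hlast : N - 1 < n := by omega
  -- the threshold is the score of the last point of the top block
  refine sum_deficit_update_lt (hF.score_nonneg _) hinv
    (sum_filter_le_sum_compl_filter (θ := score p w x ⟨N - 1, hlast⟩) hF.weight_nonneg
      (hF.score_nonneg _) (fun i hi => hsort _ _ (by simp [Fin.le_def]; omega))
      (fun i hi => hsort _ _ (by simp [Fin.le_def] at hi ⊢; omega)) hNw hF.sum_compl_weight_le
      (hF.two_mul_sum_score_le (Finset.filter_subset _ _) ?_))
  calc ∑ i ∈ G.filter (fun i : Fin n => (i : ℕ) < N), w i
      ≤ ∑ i ∈ Finset.univ.filter (fun i : Fin n => (i : ℕ) < N), w i :=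
        Finset.sum_le_sum_of_subset_of_nonneg (Finset.filter_subset_filter _ G.subset_univ)
          fun i _ _ => hF.weight_nonneg i
    _ ≤ 2 * ε + 1 / n := sum_filter_lt_le hN hNn hF.weight_le hNmin
    _ ≤ 3 * ε := by linarith [hF.one_div_le_eps]

end Paper
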